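/- Define the functions c₁₁₁, c₁₁₂, c₁₂₂, c₂₂₂ on {(x₁,x₂) ∈ ℝ² : x₁ ≠ 0} by the explicit formulas: c₁₁₁ = −(9x₁⁸ + 51x₁⁶x₂² + 88x₁⁴x₂⁴ + (2x₁²x₂³ + 4x₂⁵)√((3x₁² + 4x₂²)³) + 48x₁²x₂⁶) / (2x₁(3x₁⁴ + 7x₁²x₂² + 4x₂⁴)²); c₁₁₂ = (9x₁⁶x₂ + 15x₁⁴x₂³ − 8x₁²x₂⁵ + (2x₁²x₂² + 4x₂⁴)√((3x₁² + 4x₂²)³) − 16x₂⁷) / (2(3x₁⁴ + 7x₁²x₂² + 4x₂⁴)²); c₁₂₂ = −(9x₁⁷ + 15x₁⁵x₂² − 8x₁³x₂⁴ + (2x₁³x₂ + 4x₁x₂³)√((3x₁² + 4x₂²)³) − 16x₁x₂⁶) / (2(3x₁⁴ + 7x₁²x₂² + 4x₂⁴)²); c₂₂₂ = (−27x₁⁶x₂ − 16x₂⁷ − 72x₁²x₂⁵ + (4x₁²x₂² + 2x₁⁴)√((3x₁² + 4x₂²)³) − 81x₁⁴x₂³) / (2(3x₁⁴ + 7x₁²x₂²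 + 4x₂⁴)²). Then each of these functions is homogeneous of degree −1: for every λ > 0 and every (x₁,x₂) with x₁ ≠ 0, c_{αβγ}(λx₁, λx₂) = λ⁻¹ c_{αβγ}(x₁,x₂). -/
import Mathlib


noncomputable section

/-- `√((3x₁² + 4x₂²)³)`. -/
def s (x1 x2 : ℝ) : ℝ := Real.sqrt ((3 * x1 ^ 2 + 4 * x2 ^ 2) ^ 3)

/-- The correlator `c₁₁₁` of Example 1 (with `a = 1`, `c = 2/√7`). -/
def c111 (x1 x2 : ℝ) : ℝ :=
  -(9 * x1 ^ 8 + 51 * x1 ^ 6 * x2 ^ 2 + 88 * x1 ^ 4 * x2 ^ 4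
      + (2 * x1 ^ 2 * x2 ^ 3 + 4 * x2 ^ 5) * s x1 x2 + 48 * x1 ^ 2 * x2 ^ 6)
    / (2 * x1 * (3 * x1 ^ 4 + 7 * x1 ^ 2 * x2 ^ 2 + 4 * x2 ^ 4) ^ 2)

/-- The correlator `c₁₁₂` of Example 1 (with `a = 1`, `c = 2/√7`). -/
def c112 (x1 x2 : ℝ) : ℝ :=
  (9 * x1 ^ 6 * x2 + 15 * x1 ^ 4 * x2 ^ 3 - 8 * x1 ^ 2 * x2 ^ 5
      + (2 * x1 ^ 2 * x2 ^ 2 + 4 * x2 ^ 4) * s x1 x2 - 16 * x2 ^ 7)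
    / (2 * (3 * x1 ^ 4 + 7 * x1 ^ 2 * x2 ^ 2 + 4 * x2 ^ 4) ^ 2)

/-- The correlator `c₁₂₂` of Example 1 (with `a = 1`, `c = 2/√7`). -/
def c122 (x1 x2 : ℝ) : ℝ :=
  -(9 * x1 ^ 7 + 15 * x1 ^ 5 * x2 ^ 2 - 8 * x1 ^ 3 * x2 ^ 4
      + (2 * x1 ^ 3 * x2 + 4 * x1 * x2 ^ 3) * s x1 x2 - 16 * x1 * x2 ^ 6)
    / (2 * (3 * x1 ^ 4 + 7 * x1 ^ 2 * x2 ^ 2 + 4 * x2 ^ 4) ^ 2)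

/-- The correlator `c₂₂₂` of Example 1 (with `a = 1`, `c = 2/√7`). -/
def c222 (x1 x2 : ℝ) : ℝ :=
  (-27 * x1 ^ 6 * x2 - 16 * x2 ^ 7 - 72 * x1 ^ 2 * x2 ^ 5
      + (4 * x1 ^ 2 * x2 ^ 2 + 2 * x1 ^ 4) * s x1 x2 - 81 * x1 ^ 4 * x2 ^ 3)
    / (2 * (3 * x1 ^ 4 + 7 * x1 ^ 2 * x2 ^ 2 + 4 * x2 ^ 4) ^ 2)

lemma s_hom (l : ℝ) (hl : 0 < l) (x1 x2 : ℝ) :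
    s (l * x1) (l * x2) = l ^ 3 * s x1 x2 := by
  unfold s
  rw [show (3 * (l * x1) ^ 2 + 4 * (l * x2) ^ 2) ^ 3
      = (l ^ 3) ^ 2 * (3 * x1 ^ 2 + 4 * x2 ^ 2) ^ 3 by ring,
    Real.sqrt_mul (by positivity), Real.sqrt_sq (by positivity)]

/-- each correlator of Example 1 is homogeneous of degree `−1`:
`c_{αβγ}(λx₁, λx₂) = λ⁻¹ c_{αβγ}(x₁,x₂)` for every `λ > 0` and `x₁ ≠ 0`. -/
theorem stmt13 :
    ∀ l : ℝ, 0 < l → ∀ x1 x2 : ℝ, x1 ≠ 0 →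
      c111 (l * x1) (l * x2) = l⁻¹ * c111 x1 x2
        ∧ c112 (l * x1) (l * x2) = l⁻¹ * c112 x1 x2
        ∧ c122 (l * x1) (l * x2) = l⁻¹ * c122 x1 x2
        ∧ c222 (l * x1) (l * x2) = l⁻¹ * c222 x1 x2 := by
  intro l hl x1 x2 hx
  have hl0 : l ≠ 0 := ne_of_gt hl
  have hD : (3 * x1 ^ 4 + 7 * x1 ^ 2 * x2 ^ 2 + 4 * x2 ^ 4) ≠ 0 := by positivity
  unfold c111 c112 c122 c222
  rw [s_hom l hl]
  refine ⟨?_, ?_, ?_, ?_⟩ <;> field_simp <;> ring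

end
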